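/- arXiv:math/0702088 — 3 statements merged into one kernel-verified Lean document; each statement's English description precedes it below -/
import Mathlib

section
/- Let α > 0. There exists a constant C_N > 0 such that for every w ∈ L¹(ℝ) ∩ L²(ℝ) whose Fourier transform ŵ satisfies ∫_ℝ |ξ|^α |ŵ(ξ)|² dξ < ∞, one has ‖w‖_{L²(ℝ)}^{2(1+α)} ≤ C_N (∫_ℝ |ξ|^α |ŵ(ξ)|² dξ) ‖w‖_{L¹(ℝ)}^{2α}. -/
open MeasureTheory Real Set Filter
open scoped ENNReal

/-- The (non-unitary) Fourier transform of a real function: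
`w^(ξ) = ∫ exp(-i x ξ) w(x) dx`. -/
noncomputable def fourierNC (w : ℝ → ℝ) (ξ : ℝ) : ℂ :=
  ∫ x : ℝ, Complex.exp (-(Complex.I * x * ξ)) * w x

/-!
By Plancherel, `2π ‖w‖₂² = ∫ |ŵ|²`. Since `|ŵ| ≤ ‖w‖₁` pointwise, splitting the frequency
integral at `|ξ| = R` bounds it by `2R ‖w‖₁² + R^(-α) ∫ |ξ|^α |ŵ|²`, and the choice of `R`
balancing the two terms gives the inequality.

Plancherel for `w ∈ L¹ ∩ L²` comes from the unitary Fourier transform on `L²`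
(`Lp.fourierTransformₗᵢ`), once that is identified with the Fourier integral by pairing both
with Schwartz functions.
-/

open FourierTransform SchwartzMap
open scoped Topology

theorem MeasureTheory.Lp.norm_sq_eq_integral_norm_sq {α 𝕜 F : Type*} [MeasurableSpace α]
    {μ : Measure α} [RCLike 𝕜] [NormedAddCommGroup F] [InnerProductSpace 𝕜 F] (f : Lp F 2 μ) :
    ‖f‖ ^ 2 = ∫ x, ‖f x‖ ^ 2 ∂μ := by
  rw [@norm_sq_eq_re_inner 𝕜, L2.inner_def, ← integral_re (L2.integrable_inner f f)]
  simp only [← @norm_sq_eq_re_inner 𝕜]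

section Plancherel

variable {V F : Type*} [NormedAddCommGroup V] [InnerProductSpace ℝ V] [FiniteDimensional ℝ V]
  [MeasurableSpace V] [BorelSpace V] [NormedAddCommGroup F] [InnerProductSpace ℂ F]
  [CompleteSpace F] {f : V → F}

theorem MeasureTheory.MemLp.fourier_toLp_ae_eq (hf₁ : Integrable f) (hf₂ : MemLp f 2) :
    ((𝓕 (hf₂.toLp f) : Lp F 2 volume) : V → F) =ᵐ[volume] 𝓕 f := by
  refine ae_eq_of_integral_contDiff_smul_eq
    ((Lp.memLp _).locallyIntegrable (p := 2) (by norm_num))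
    (VectorFourier.fourierIntegral_continuous Real.continuous_fourierChar continuous_inner
      hf₁).locallyIntegrable fun g hg_smooth hg_supp => ?_
  set G : 𝓢(V, ℂ) :=
    (hg_supp.comp_left rfl : HasCompactSupport (Complex.ofRealCLM ∘ g)).toSchwartzMap (by fun_prop)
  have hG : ∀ x, G x = g x := fun x => rfl
  calc ∫ x, g x • ((𝓕 (hf₂.toLp f) : Lp F 2 volume) : V → F) x
      = Lp.toTemperedDistribution (𝓕 (hf₂.toLp f)) G := by
        simp [hG]
    _ = Lp.toTemperedDistribution (hf₂.toLp f) (𝓕 G) := by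
        rw [← Lp.fourier_toTemperedDistribution_eq]; rfl
    _ = ∫ x, 𝓕 G x • f x := by
        rw [Lp.toTemperedDistribution_apply]
        exact integral_congr_ae (by filter_upwards [hf₂.coeFn_toLp] with x hx; rw [hx])
    _ = ∫ ξ, G ξ • 𝓕 f ξ := by
        simpa using! (VectorFourier.integral_fourierIntegral_smul_eq_flip (L := innerₗ V)
          Real.continuous_fourierChar continuous_inner G.integrable hf₁)
    _ = ∫ ξ, g ξ • 𝓕 f ξ := by simp [hG]

theorem MeasureTheory.Integrable.integral_norm_fourier_sq (hf₁ : Integrable f) (hf₂ : MemLp f 2) :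
    ∫ ξ, ‖𝓕 f ξ‖ ^ 2 = ∫ x, ‖f x‖ ^ 2 := by
  calc ∫ ξ, ‖𝓕 f ξ‖ ^ 2 = ‖(𝓕 (hf₂.toLp f) : Lp F 2 volume)‖ ^ 2 := by
        rw [Lp.norm_sq_eq_integral_norm_sq (𝕜 := ℂ)]
        exact integral_congr_ae (by
          filter_upwards [hf₂.fourier_toLp_ae_eq hf₁] with ξ hξ; rw [hξ])
    _ = ‖hf₂.toLp f‖ ^ 2 := by rw [Lp.norm_fourier_eq]
    _ = ∫ x, ‖f x‖ ^ 2 := by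
        rw [Lp.norm_sq_eq_integral_norm_sq (𝕜 := ℂ)]
        exact integral_congr_ae (by filter_upwards [hf₂.coeFn_toLp] with x hx; rw [hx])

end Plancherel

theorem fourierNC_eq_fourier (w : ℝ → ℝ) (ξ : ℝ) :
    fourierNC w ξ = 𝓕 (fun x => (w x : ℂ)) (ξ / (2 * π)) := by
  rw [fourierNC, Real.fourier_real_eq_integral_exp_smul]
  congr 1 with x
  rw [smul_eq_mul]
  congr 2
  push_cast
  field_simp

theorem integral_norm_fourierNC_sq {w : ℝ → ℝ} (hw₁ : Integrable w) (hw₂ : MemLp w 2) :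
    ∫ ξ, ‖fourierNC w ξ‖ ^ 2 = 2 * π * ∫ x, w x ^ 2 := by
  simp_rw [fourierNC_eq_fourier]
  rw [Measure.integral_comp_div (fun η => ‖𝓕 (fun x => (w x : ℂ)) η‖ ^ 2),
    hw₁.ofReal.integral_norm_fourier_sq hw₂.ofReal, abs_of_pos (by positivity), smul_eq_mul]
  simp

theorem norm_fourierNC_le (w : ℝ → ℝ) (ξ : ℝ) : ‖fourierNC w ξ‖ ≤ ∫ x, |w x| := by
  rw [fourierNC_eq_fourier]
  exact (VectorFourier.norm_fourierIntegral_le_integral_norm _ _ _ _ _).trans_eq (by simp)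

theorem integral_le_of_le_of_integrable_abs_rpow_mul {α K R : ℝ} {u : ℝ → ℝ} (hα : 0 < α)
    (hR : 0 < R) (hu₀ : ∀ ξ, 0 ≤ u ξ) (huK : ∀ ξ, u ξ ≤ K)
    (hu : Integrable fun ξ => |ξ| ^ α * u ξ) :
    ∫ ξ, u ξ ≤ 2 * R * K + R ^ (-α) * ∫ ξ, |ξ| ^ α * u ξ := by
  have hK : 0 ≤ K := (hu₀ 0).trans (huK 0)
  have hsplit : ∀ ξ, u ξ ≤ (Icc (-R) R).indicator (fun _ => K) ξ + R ^ (-α) * (|ξ| ^ α * u ξ) := by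
    intro ξ
    by_cases hξ : |ξ| ≤ R
    · rw [indicator_of_mem (show ξ ∈ Icc (-R) R from abs_le.mp hξ)]
      have : 0 ≤ R ^ (-α) * (|ξ| ^ α * u ξ) := by have := hu₀ ξ; positivity
      linarith [huK ξ]
    · have hlarge : 1 ≤ R ^ (-α) * |ξ| ^ α := by
        rw [rpow_neg hR.le, ← div_eq_inv_mul, one_le_div (by positivity)]
        exact rpow_le_rpow hR.le (not_le.mp hξ).le hα.le
      have : 0 ≤ (Icc (-R) R).indicator (fun _ => K) ξ := indicator_nonneg (fun _ _ => hK) ξ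
      nlinarith [hu₀ ξ]
  have hind : Integrable ((Icc (-R) R).indicator fun _ => K) :=
    (integrable_indicator_iff measurableSet_Icc).mpr (integrableOn_const (by simp))
  calc ∫ ξ, u ξ ≤ ∫ ξ, ((Icc (-R) R).indicator (fun _ => K) ξ + R ^ (-α) * (|ξ| ^ α * u ξ)) :=
        integral_mono_of_nonneg (.of_forall hu₀) (hind.add (hu.const_mul _)) (.of_forall hsplit)
    _ = 2 * R * K + R ^ (-α) * ∫ ξ, |ξ| ^ α * u ξ := by
        rw [integral_add hind (hu.const_mul _), integral_indicator_const _ measurableSet_Icc,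
          integral_const_mul, measureReal_def, Real.volume_Icc, smul_eq_mul,
          ENNReal.toReal_ofReal (by linarith)]
        ring

theorem rpow_one_add_le_of_forall_le_mul_add_rpow_neg_mul_of_pos {α a b N : ℝ} (hα : 0 < α)
    (ha : 0 < a) (hb : 0 < b) (hN : 0 ≤ N) (h : ∀ R > 0, N ≤ a * R + R ^ (-α) * b) :
    N ^ (1 + α) ≤ 2 ^ (1 + α) * b * a ^ α := by
  -- the choice of `R` balancing the two terms
  set R := (b / a) ^ (1 + α)⁻¹
  have hR : 0 < R := by positivity
  have hR_pow : R ^ (1 + α) = b / a := by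
    rw [← rpow_mul (by positivity), inv_mul_cancel₀ (by positivity), rpow_one]
  have hbalance : R ^ (-α) * b = a * R := by
    rw [rpow_neg hR.le, show b = a * R ^ (1 + α) by rw [hR_pow]; field_simp,
      rpow_add hR, rpow_one]
    field_simp
  calc N ^ (1 + α) ≤ (2 * (a * R)) ^ (1 + α) := by
        gcongr
        exact (h R hR).trans_eq (by rw [hbalance]; ring)
    _ = 2 ^ (1 + α) * b * a ^ α := by
        rw [mul_rpow (by norm_num) (by positivity), mul_rpow ha.le hR.le, hR_pow,
          rpow_add ha, rpow_one]
        field_simp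

theorem rpow_one_add_le_of_forall_le_mul_add_rpow_neg_mul {α a b N : ℝ} (hα : 0 < α)
    (ha : 0 ≤ a) (hb : 0 ≤ b) (hN : 0 ≤ N) (h : ∀ R > 0, N ≤ a * R + R ^ (-α) * b) :
    N ^ (1 + α) ≤ 2 ^ (1 + α) * b * a ^ α := by
  have hcont : Continuous fun ε : ℝ => 2 ^ (1 + α) * (b + ε) * (a + ε) ^ α :=
    continuous_const.mul (continuous_const.add continuous_id) |>.mul
      ((continuous_const.add continuous_id).rpow_const fun _ => Or.inr hα.le)
  have hlim : Tendsto (fun ε => 2 ^ (1 + α) * (b + ε) * (a + ε) ^ α) (𝓝[>] 0)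
      (𝓝 (2 ^ (1 + α) * b * a ^ α)) := by
    simpa using hcont.continuousWithinAt.tendsto (x := 0) (s := Ioi 0)
  refine ge_of_tendsto hlim ?_
  filter_upwards [self_mem_nhdsWithin] with ε (hε : 0 < ε)
  refine rpow_one_add_le_of_forall_le_mul_add_rpow_neg_mul_of_pos hα (by positivity)
    (by positivity) hN fun R hR => (h R hR).trans ?_
  gcongr <;> linarith

/-- Nash inequality for `Lambda^alpha`:
`‖w‖₂^(2(1+α)) ≤ C_N (∫ |ξ|^α |w^(ξ)|² dξ) ‖w‖₁^(2α)`. -/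
theorem nash_inequality_fracLap (α : ℝ) (hα : 0 < α) :
    ∃ C > (0:ℝ), ∀ w : ℝ → ℝ, Integrable w → MemLp w 2 volume →
      Integrable (fun ξ => |ξ| ^ α * ‖fourierNC w ξ‖ ^ 2) →
      (∫ x : ℝ, (w x) ^ 2) ^ (1 + α) ≤
        C * (∫ ξ : ℝ, |ξ| ^ α * ‖fourierNC w ξ‖ ^ 2) *
          (∫ x : ℝ, |w x|) ^ (2 * α) := by
  refine ⟨2 ^ (1 + α), by positivity, fun w hw₁ hw₂ hA => ?_⟩
  set M := ∫ x, |w x|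
  set A := ∫ ξ, |ξ| ^ α * ‖fourierNC w ξ‖ ^ 2
  have hM : 0 ≤ M := integral_nonneg fun x => abs_nonneg _
  have hA₀ : 0 ≤ A := integral_nonneg fun ξ => by positivity
  have hN : 0 ≤ ∫ x, w x ^ 2 := integral_nonneg fun x => sq_nonneg _
  have hsplit : ∀ R > 0, ∫ x, w x ^ 2 ≤ M ^ 2 * R + R ^ (-α) * A := by
    intro R hR
    have h := integral_le_of_le_of_integrable_abs_rpow_mul hα hR
      (fun ξ => sq_nonneg ‖fourierNC w ξ‖)
      (fun ξ => pow_le_pow_left₀ (norm_nonneg _) (norm_fourierNC_le w ξ) 2) hA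
    rw [integral_norm_fourierNC_sq hw₁ hw₂] at h
    have : 0 ≤ R ^ (-α) * A := by positivity
    nlinarith [mul_le_mul_of_nonneg_right pi_gt_three.le hN]
  calc (∫ x, w x ^ 2) ^ (1 + α) ≤ 2 ^ (1 + α) * A * (M ^ 2) ^ α :=
        rpow_one_add_le_of_forall_le_mul_add_rpow_neg_mul hα (by positivity) hA₀ hN hsplit
    _ = 2 ^ (1 + α) * A * M ^ (2 * α) := by
        rw [← rpow_natCast, ← rpow_mul hM]; norm_num
end

section
/- Let p > 1. Let v : ℝ → ℝ be a smooth function such that v and v′ belong to L^q(ℝ) for every q ∈ [1,∞], and let g : ℝ → ℝ be a C¹ function that is bounded together with its derivative. Then ∫_ℝ (v² + 2 v g)′(x) |v(x)|^{p−2} v(x) dx = 2(1 − 1/p) ∫_ℝ g′(x) |v(x)|^p dx, where (v² + 2vg)′ denotes the derivative of the function x ↦ v(x)² + 2 v(x) g(x) and the integrand |v(x)|^{p−2}v(x) is interpreted as 0 where v(x)=0. In particular, if g′(x) ≥ 0 for all x, then ∫_ℝ (v² + 2 v g)′(x) |v(x)|^{p−2} v(x) dx ≥ 0. -/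
open MeasureTheory Real Set Filter Topology
open scoped ENNReal

private lemma abs_rpow_key {p : ℝ} (hp : 1 < p) (a : ℝ) :
    |a| ^ (p - 2) * a * a = |a| ^ p := by
  rcases eq_or_ne a 0 with rfl | ha
  · simp [Real.zero_rpow (by positivity : p ≠ 0)]
  · have h0 : (0:ℝ) < |a| := abs_pos.mpr ha
    have h2 : a * a = |a| ^ (2:ℝ) := by
      rw [show (2:ℝ) = ((2:ℕ):ℝ) by norm_num, Real.rpow_natCast, pow_two, abs_mul_abs_self]
    rw [mul_assoc, h2, ← Real.rpow_add h0]
    norm_num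

private lemma abs_rpow_abs {p : ℝ} (hp : 1 < p) (a : ℝ) :
    |(|a| ^ (p - 2) * a)| = |a| ^ (p - 1) := by
  rcases eq_or_ne a 0 with rfl | ha
  · simp [Real.zero_rpow (show p - 1 ≠ 0 by intro h; linarith)]
  · rw [abs_mul, abs_of_nonneg (Real.rpow_nonneg (abs_nonneg a) _),
      ← Real.rpow_add_one (abs_ne_zero.mpr ha)]
    ring_nf

private lemma hasDerivAt_abs_rpow_mul {p : ℝ} (hp : 1 < p) (x : ℝ) :
    HasDerivAt (fun y : ℝ => |y| ^ p * y) ((p + 1) * |x| ^ p) x := by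
  have h := (hasDerivAt_abs_rpow x hp).mul (hasDerivAt_id x)
  have e : p * |x| ^ (p - 2) * x * id x + |x| ^ p * 1 = (p + 1) * |x| ^ p := by
    simp only [id_eq, mul_one]
    linear_combination p * abs_rpow_key hp x
  rw [← e]
  exact h

private lemma integral_deriv_eq_zero_aux (f f' : ℝ → ℝ)
    (hd : ∀ x, HasDerivAt f (f' x) x) (hi : Integrable f')
    (hbot : Tendsto f atBot (𝓝 0)) (htop : Tendsto f atTop (𝓝 0)) :
    ∫ x, f' x = 0 := by
  have h1 := integral_Ioi_of_hasDerivAt_of_tendsto' (a := 0) (fun x _ => hd x)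
    hi.integrableOn htop
  have h2 := integral_Iic_of_hasDerivAt_of_tendsto' (a := 0) (fun x _ => hd x)
    hi.integrableOn hbot
  rw [← intervalIntegral.integral_Iic_add_Ioi (b := (0:ℝ)) hi.integrableOn hi.integrableOn, h1, h2]
  ring

/-- The key identity for the convective term:
`∫ (v² + 2vg)'(x) |v(x)|^(p-2) v(x) dx = 2(1 - 1/p) ∫ g'(x) |v(x)|^p dx`,
and in particular the left-hand side is nonnegative when `g' ≥ 0`. -/
theorem convective_term_identity (p : ℝ) (hp : 1 < p) (v g : ℝ → ℝ)
    (hv : ContDiff ℝ (⊤ : ℕ∞) v)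
    (hvq : ∀ q : ℝ≥0∞, 1 ≤ q → MemLp v q volume ∧ MemLp (deriv v) q volume)
    (hg : ContDiff ℝ 1 g)
    (hgb : ∃ B : ℝ, ∀ x : ℝ, |g x| ≤ B)
    (hgb' : ∃ B : ℝ, ∀ x : ℝ, |deriv g x| ≤ B) :
    ((∫ x : ℝ, deriv (fun y => v y ^ 2 + 2 * v y * g y) x * (|v x| ^ (p - 2) * v x)) =
        2 * (1 - 1 / p) * ∫ x : ℝ, deriv g x * |v x| ^ p) ∧
      ((∀ x : ℝ, 0 ≤ deriv g x) →
        0 ≤ ∫ x : ℝ, deriv (fun y => v y ^ 2 + 2 * v y * g y) x *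
          (|v x| ^ (p - 2) * v x)) := by
  obtain ⟨Bg, hBg⟩ := hgb
  obtain ⟨Bg', hBg'⟩ := hgb'
  set w := deriv v with hw
  set h := deriv g with hh
  have hp0 : (0:ℝ) < p := by linarith
  have hvd : Differentiable ℝ v := hv.differentiable (by simp)
  have hgd : Differentiable ℝ g := hg.differentiable one_ne_zero
  have hvc : Continuous v := hv.continuous
  have hwc : Continuous w := hv.continuous_deriv (by simp)
  have hhc : Continuous h := hg.continuous_deriv le_rfl
  have hv1 : Integrable v := memLp_one_iff_integrable.mp (hvq 1 le_rfl).1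
  have hw1 : Integrable w := memLp_one_iff_integrable.mp (hvq 1 le_rfl).2
  -- powers are integrable
  have mem_le : ∀ q : ℝ, 1 ≤ q →
      Integrable (fun x => |v x| ^ q) ∧ Integrable (fun x => |w x| ^ q) := by
    intro q hq
    have hq1 : (1:ℝ≥0∞) ≤ ENNReal.ofReal q := by
      rw [← ENNReal.ofReal_one]; exact ENNReal.ofReal_le_ofReal hq
    obtain ⟨m1, m2⟩ := hvq (ENNReal.ofReal q) hq1
    have hqt : (ENNReal.ofReal q).toReal = q := ENNReal.toReal_ofReal (by linarith)
    have h0 : ENNReal.ofReal q ≠ 0 := (lt_of_lt_of_le zero_lt_one hq1).ne'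
    constructor
    · have := m1.integrable_norm_rpow h0 ENNReal.ofReal_ne_top
      simpa [hqt, Real.norm_eq_abs] using this
    · have := m2.integrable_norm_rpow h0 ENNReal.ofReal_ne_top
      simpa [hqt, Real.norm_eq_abs] using this
  obtain ⟨hVp, hWp⟩ := mem_le p hp.le
  obtain ⟨hVp1, hWp1⟩ := mem_le (p+1) (by linarith)
  -- integrability of the three pieces
  have hconj1 : ((p+1)/p).HolderConjugate (p+1) := by
    rw [Real.holderConjugate_iff]
    constructor
    · rw [lt_div_iff₀ hp0]; linarith
    · rw [inv_div]; field_simp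
  have hconj2 : (p/(p-1)).HolderConjugate p := by
    rw [Real.holderConjugate_iff]
    constructor
    · rw [lt_div_iff₀ (by linarith : (0:ℝ) < p - 1)]; linarith
    · rw [inv_div]; field_simp; ring
  have hPw : Integrable (fun x => |v x| ^ p * w x) := by
    apply Integrable.mono'
      (g := fun x => |v x| ^ (p+1) / ((p+1)/p) + |w x| ^ (p+1) / (p+1))
      ((hVp1.div_const _).add (hWp1.div_const _))
      (((hvc.abs.measurable.pow_const _).mul hwc.measurable).aestronglyMeasurable)
    filter_upwards with x
    have hy := Real.young_inequality_of_nonneg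
      (Real.rpow_nonneg (abs_nonneg (v x)) p) (abs_nonneg (w x)) hconj1
    have e1 : (|v x| ^ p) ^ ((p+1)/p) = |v x| ^ (p+1) := by
      rw [← Real.rpow_mul (abs_nonneg _)]
      congr 1; field_simp
    rw [e1] at hy
    calc ‖|v x| ^ p * w x‖ = |v x| ^ p * |w x| := by
          rw [Real.norm_eq_abs, abs_mul, abs_of_nonneg (Real.rpow_nonneg (abs_nonneg _) _)]
      _ ≤ _ := hy
  have hR : Integrable (fun x => |v x| ^ (p-2) * v x * w x) := by
    apply Integrable.mono'
      (g := fun x => |v x| ^ p / (p/(p-1)) + |w x| ^ p / p)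
      ((hVp.div_const _).add (hWp.div_const _))
      ((((hvc.abs.measurable.pow_const _).mul hvc.measurable).mul
        hwc.measurable).aestronglyMeasurable)
    filter_upwards with x
    have hy := Real.young_inequality_of_nonneg
      (Real.rpow_nonneg (abs_nonneg (v x)) (p-1)) (abs_nonneg (w x)) hconj2
    have e1 : (|v x| ^ (p-1)) ^ (p/(p-1)) = |v x| ^ p := by
      rw [← Real.rpow_mul (abs_nonneg _)]
      congr 1
      rw [mul_comm]
      exact div_mul_cancel₀ p (by linarith : p - (1:ℝ) ≠ 0)
    rw [e1] at hy
    calc ‖|v x| ^ (p-2) * v x * w x‖ = |v x| ^ (p-1) * |w x| := by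
          rw [Real.norm_eq_abs, abs_mul, abs_rpow_abs hp (v x)]
      _ ≤ _ := hy
  have hgR : Integrable (fun x => g x * (|v x| ^ (p-2) * v x * w x)) :=
    hR.bdd_mul hg.continuous.aestronglyMeasurable
      (ae_of_all _ fun x => by simpa [Real.norm_eq_abs] using hBg x)
  have hhP : Integrable (fun x => h x * |v x| ^ p) :=
    hVp.bdd_mul hhc.aestronglyMeasurable
      (ae_of_all _ fun x => by simpa [Real.norm_eq_abs] using hBg' x)
  -- limits at infinity
  have hvTop : Tendsto v atTop (𝓝 0) :=
    tendsto_zero_of_hasDerivAt_of_integrableOn_Ioi (a := 0)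
      (fun x _ => (hvd x).hasDerivAt) hw1.integrableOn hv1.integrableOn
  have hvBot : Tendsto v atBot (𝓝 0) :=
    tendsto_zero_of_hasDerivAt_of_integrableOn_Iic (a := 0)
      (fun x _ => (hvd x).hasDerivAt) hw1.integrableOn hv1.integrableOn
  have hP00 : |(0:ℝ)| ^ p = 0 := by simp [Real.zero_rpow hp0.ne']
  have hPTop : Tendsto (fun x => |v x| ^ p) atTop (𝓝 0) := by
    have := (hasDerivAt_abs_rpow (0:ℝ) hp).continuousAt.tendsto.comp hvTop
    rwa [hP00] at this
  have hPBot : Tendsto (fun x => |v x| ^ p) atBot (𝓝 0) := by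
    have := (hasDerivAt_abs_rpow (0:ℝ) hp).continuousAt.tendsto.comp hvBot
    rwa [hP00] at this
  have hQTop : Tendsto (fun x => |v x| ^ p * v x) atTop (𝓝 0) := by
    have := (hasDerivAt_abs_rpow_mul hp (0:ℝ)).continuousAt.tendsto.comp hvTop
    rwa [show |(0:ℝ)| ^ p * 0 = 0 from mul_zero _] at this
  have hQBot : Tendsto (fun x => |v x| ^ p * v x) atBot (𝓝 0) := by
    have := (hasDerivAt_abs_rpow_mul hp (0:ℝ)).continuousAt.tendsto.comp hvBot
    rwa [show |(0:ℝ)| ^ p * 0 = 0 from mul_zero _] at this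
  have hgP_bound : ∀ x, ‖g x * |v x| ^ p‖ ≤ Bg * |v x| ^ p := by
    intro x
    rw [Real.norm_eq_abs, abs_mul, abs_of_nonneg (Real.rpow_nonneg (abs_nonneg _) _)]
    exact mul_le_mul_of_nonneg_right (hBg x) (Real.rpow_nonneg (abs_nonneg _) _)
  have hgPTop : Tendsto (fun x => g x * |v x| ^ p) atTop (𝓝 0) := by
    apply squeeze_zero_norm hgP_bound
    have := hPTop.const_mul Bg
    simpa using this
  have hgPBot : Tendsto (fun x => g x * |v x| ^ p) atBot (𝓝 0) := by
    apply squeeze_zero_norm hgP_bound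
    have := hPBot.const_mul Bg
    simpa using this
  -- derivatives of composites
  have hQd : ∀ x, HasDerivAt (fun y => |v y| ^ p * v y) ((p+1) * (|v x| ^ p * w x)) x := by
    intro x
    have := (hasDerivAt_abs_rpow_mul hp (v x)).comp x (hvd x).hasDerivAt
    rw [mul_assoc] at this
    exact this
  have hPd : ∀ x, HasDerivAt (fun y => |v y| ^ p) ((p * |v x| ^ (p-2) * v x) * w x) x :=
    fun x => (hasDerivAt_abs_rpow (v x) hp).comp x (hvd x).hasDerivAt
  have hgPd : ∀ x, HasDerivAt (fun y => g y * |v y| ^ p)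
      (h x * |v x| ^ p + g x * ((p * |v x| ^ (p-2) * v x) * w x)) x :=
    fun x => ((hgd x).hasDerivAt.mul (hPd x))
  -- the two FTC identities
  have hI1 : ∫ x, |v x| ^ p * w x = 0 := by
    have hZ := integral_deriv_eq_zero_aux _ _ hQd (hPw.const_mul (p+1)) hQBot hQTop
    rw [integral_const_mul] at hZ
    rcases mul_eq_zero.mp hZ with hc | hc
    · exact absurd hc (by linarith)
    · exact hc
  have hgR' : Integrable (fun x => g x * ((p * |v x| ^ (p-2) * v x) * w x)) :=
    (hgR.const_mul p).congr (ae_of_all _ fun x => by ring)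
  have hZ2 := integral_deriv_eq_zero_aux _ _ hgPd (hhP.add hgR') hgPBot hgPTop
  rw [integral_add hhP hgR'] at hZ2
  have e2 : ∫ x, g x * ((p * |v x| ^ (p-2) * v x) * w x)
      = p * ∫ x, g x * (|v x| ^ (p-2) * v x * w x) := by
    rw [← integral_const_mul]
    exact integral_congr_ae (ae_of_all _ fun x => by ring)
  rw [e2] at hZ2
  -- hZ2 : ∫ h P + p * ∫ g R = 0
  set K := ∫ x, h x * |v x| ^ p with hK
  set IG := ∫ x, g x * (|v x| ^ (p-2) * v x * w x) with hIG
  -- pointwise rewriting of the integrand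
  have hint_eq : ∀ x, deriv (fun y => v y ^ 2 + 2 * v y * g y) x * (|v x| ^ (p - 2) * v x)
      = 2 * (|v x| ^ p * w x) + (2 * (g x * (|v x| ^ (p-2) * v x * w x))
        + 2 * (h x * |v x| ^ p)) := by
    intro x
    have d1 : HasDerivAt (fun y => v y ^ 2) (2 * v x * w x) x := by
      have := (hvd x).hasDerivAt.pow 2
      norm_num at this
      exact this
    have d2 : HasDerivAt (fun y => 2 * v y * g y) (2 * w x * g x + 2 * v x * h x) x := by
      have := ((hvd x).hasDerivAt.const_mul 2).mul (hgd x).hasDerivAt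
      exact this
    have hd : deriv (fun y => v y ^ 2 + 2 * v y * g y) x
        = 2 * v x * w x + (2 * w x * g x + 2 * v x * h x) := (d1.add d2).deriv
    rw [hd]
    linear_combination (2 * w x + 2 * h x) * abs_rpow_key hp (v x)
  have main : (∫ x : ℝ, deriv (fun y => v y ^ 2 + 2 * v y * g y) x * (|v x| ^ (p - 2) * v x))
      = 2 * (1 - 1 / p) * K := by
    simp only [hint_eq]
    have hA : Integrable (fun x => 2 * (|v x| ^ p * w x)) := hPw.const_mul 2
    have hB : Integrable (fun x => 2 * (g x * (|v x| ^ (p-2) * v x * w x))) := hgR.const_mul 2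
    have hC : Integrable (fun x => 2 * (h x * |v x| ^ p)) := hhP.const_mul 2
    have hBC : Integrable (fun x => 2 * (g x * (|v x| ^ (p-2) * v x * w x))
        + 2 * (h x * |v x| ^ p)) := hB.add hC
    rw [integral_add hA hBC, integral_add hB hC,
      integral_const_mul, integral_const_mul, integral_const_mul,
      ← hK, ← hIG, hI1]
    have hIGval : IG = -K / p := by
      field_simp
      linarith [hZ2]
    rw [hIGval]
    field_simp
    ring
  refine ⟨main, fun hmono => ?_⟩
  rw [main]
  apply mul_nonneg
  · have : 1 / p ≤ 1 := by
      rw [div_le_one hp0]; linarith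
    linarith
  · exact integral_nonneg fun x => mul_nonneg (hmono x) (Real.rpow_nonneg (abs_nonneg _) _)
end

section
/- Let 1 < p₀ < p ≤ ∞ and set a = (1/p₀ − 1/p)/(1 + 1/p₀). There exists a constant C > 0 such that for every C¹ function v : ℝ → ℝ with v ∈ L^{p₀}(ℝ) and v′ ∈ L^∞(ℝ), one has ‖v‖_{L^p(ℝ)} ≤ C ‖v′‖_{L^∞(ℝ)}^{a} ‖v‖_{L^{p₀}(ℝ)}^{1−a}. -/
/-!
If `|v'| ≤ M` and `|v x| = c`, then `|v| ≥ c/2` on an interval of length `c/(2M)` starting at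
`x`, so `(c/2)^p₀ · c/(2M) ≤ ‖v‖_{p₀}^{p₀}`. This gives the sup bound
`‖v‖_∞ ≤ 2 M^{1/(p₀+1)} ‖v‖_{p₀}^{p₀/(p₀+1)}`, and the `L^p` bound follows by interpolating
`‖v‖_p ≤ ‖v‖_∞^{1-p₀/p} ‖v‖_{p₀}^{p₀/p}`.
-/

open MeasureTheory Real Set
open scoped ENNReal NNReal

theorem Continuous.enorm_le_eLpNorm_top {X E : Type*} [TopologicalSpace X] [MeasurableSpace X]
    {μ : Measure X} [μ.IsOpenPosMeasure] [NormedAddCommGroup E] {g : X → E}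
    (hg : Continuous g) (x : X) : ‖g x‖ₑ ≤ eLpNorm g ⊤ μ := by
  have hdense : Dense {y | ‖g y‖ₑ ≤ eLpNorm g ⊤ μ} :=
    Measure.dense_of_ae (μ := μ) ae_le_eLpNormEssSup
  have hclosed : IsClosed {y | ‖g y‖ₑ ≤ eLpNorm g ⊤ μ} := isClosed_le hg.enorm continuous_const
  exact hclosed.closure_subset (hdense.closure_eq.symm ▸ mem_univ x)

theorem LipschitzWith.eq_zero_of_memLp {E : Type*} [NormedAddCommGroup E] {f : ℝ → E}
    {p : ℝ≥0∞} (hp₀ : p ≠ 0) (hp : p ≠ ⊤) (hf : LipschitzWith 0 f) (hfp : MemLp f p volume) :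
    f = 0 := by
  have hconst : f = fun _ => f 0 := funext fun x => (LipschitzWith.zero_iff f).1 hf x 0
  rw [hconst, memLp_const_iff hp₀ hp, Real.volume_univ] at hfp
  simp only [lt_self_iff_false, or_false] at hfp
  rw [hconst, hfp]; rfl

theorem eLpNorm_ofReal_rpow_eq_lintegral {α E : Type*} [MeasurableSpace α]
    {μ : Measure α} [NormedAddCommGroup E] (f : α → E) {p : ℝ} (hp : 0 < p) :
    eLpNorm f (ENNReal.ofReal p) μ ^ p = ∫⁻ x, ‖f x‖ₑ ^ p ∂μ := by
  rw [eLpNorm_eq_eLpNorm' (by simpa using hp) ENNReal.ofReal_ne_top,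
    ENNReal.toReal_ofReal hp.le, lintegral_rpow_enorm_eq_rpow_eLpNorm' hp]

theorem eLpNorm_le_eLpNorm_top_rpow_mul_eLpNorm_rpow {α E : Type*} [MeasurableSpace α]
    {μ : Measure α} [NormedAddCommGroup E] {f : α → E} (hf : AEStronglyMeasurable f μ)
    {p : ℝ} {q : ℝ≥0∞} (hp : 0 < p) (hpq : ENNReal.ofReal p ≤ q) :
    eLpNorm f q μ ≤
      eLpNorm f ⊤ μ ^ (1 - p / q.toReal) * eLpNorm f (ENNReal.ofReal p) μ ^ (p / q.toReal) := by
  -- at `q = ∞` the exponents are `1` and `0`, since `(∞).toReal = 0`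
  rcases eq_or_ne q ⊤ with rfl | hq
  · simp
  set r := q.toReal
  have hpr : p ≤ r := by
    simpa [ENNReal.toReal_ofReal hp.le] using ENNReal.toReal_mono hq hpq
  have hr : 0 < r := hp.trans_le hpr
  set S := eLpNorm f ⊤ μ
  set N := eLpNorm f (ENNReal.ofReal p) μ
  have hpow : ∫⁻ x, ‖f x‖ₑ ^ r ∂μ ≤ S ^ (r - p) * N ^ p := by
    rw [eLpNorm_ofReal_rpow_eq_lintegral f hp,
      ← lintegral_const_mul'' _ (hf.enorm.pow_const p)]
    refine lintegral_mono_ae ?_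
    filter_upwards [ae_le_eLpNormEssSup (f := f) (μ := μ)] with x hx
    calc ‖f x‖ₑ ^ r = ‖f x‖ₑ ^ (r - p) * ‖f x‖ₑ ^ p := by
          rw [← ENNReal.rpow_add_of_nonneg _ _ (sub_nonneg.2 hpr) hp.le, sub_add_cancel]
      _ ≤ S ^ (r - p) * ‖f x‖ₑ ^ p := by
          gcongr
          simpa [S] using hx
  calc eLpNorm f q μ = (∫⁻ x, ‖f x‖ₑ ^ r ∂μ) ^ (1 / r) :=
        eLpNorm_eq_lintegral_rpow_enorm_toReal (ENNReal.toReal_pos_iff.1 hr).1.ne' hq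
    _ ≤ (S ^ (r - p) * N ^ p) ^ (1 / r) := by gcongr
    _ = S ^ (1 - p / r) * N ^ (p / r) := by
        rw [ENNReal.mul_rpow_of_nonneg _ _ (by positivity), ← ENNReal.rpow_mul, ← ENNReal.rpow_mul]
        congr 2 <;> field_simp

theorem LipschitzWith.enorm_rpow_le_lintegral {E : Type*} [NormedAddCommGroup E] {f : ℝ → E}
    {K : ℝ≥0} (hf : LipschitzWith K f) (hK : K ≠ 0) {p : ℝ} (hp : 0 < p) (x : ℝ) :
    ‖f x‖ₑ ^ (p + 1) ≤ 2 ^ (p + 1) * K * ∫⁻ t, ‖f t‖ₑ ^ p := by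
  set c := ‖f x‖
  rcases (norm_nonneg (f x)).eq_or_lt with hc | hc
  · rw [← ofReal_norm, ← hc, ENNReal.ofReal_zero, ENNReal.zero_rpow_of_pos (by linarith)]
    exact zero_le
  have hKpos : (0 : ℝ) < K := NNReal.coe_pos.2 (pos_iff_ne_zero.2 hK)
  set δ := c / (2 * K)
  have hlarge : ∀ t ∈ Icc x (x + δ), c / 2 ≤ ‖f t‖ := by
    intro t ht
    have hdist : ‖f x - f t‖ ≤ K * (t - x) := by
      simpa [dist_eq_norm, Real.dist_eq, abs_sub_comm x t, abs_of_nonneg (sub_nonneg.2 ht.1)]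
        using hf.dist_le_mul x t
    have hKδ : K * δ = c / 2 := by simp only [δ]; field_simp
    nlinarith [norm_sub_norm_le (f x) (f t), ht.2]
  have hmass : ENNReal.ofReal (c / 2) ^ p * ENNReal.ofReal δ ≤ ∫⁻ t, ‖f t‖ₑ ^ p :=
    calc ENNReal.ofReal (c / 2) ^ p * ENNReal.ofReal δ
        = ∫⁻ _ in Icc x (x + δ), ENNReal.ofReal (c / 2) ^ p := by
          rw [setLIntegral_const, Real.volume_Icc, add_sub_cancel_left]
      _ ≤ ∫⁻ t in Icc x (x + δ), ‖f t‖ₑ ^ p :=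
          setLIntegral_mono' measurableSet_Icc fun t ht => by
            rw [← ofReal_norm]
            gcongr
            exact hlarge t ht
      _ ≤ ∫⁻ t, ‖f t‖ₑ ^ p := setLIntegral_le_lintegral _ _
  calc ‖f x‖ₑ ^ (p + 1)
      = 2 ^ (p + 1) * K * (ENNReal.ofReal (c / 2) ^ p * ENNReal.ofReal δ) := by
        rw [← ofReal_norm, ← ENNReal.ofReal_ofNat 2, ← ENNReal.ofReal_coe_nnreal,
          ENNReal.ofReal_rpow_of_nonneg (by positivity) (by linarith),
          ENNReal.ofReal_rpow_of_nonneg (by positivity) (by linarith),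
          ENNReal.ofReal_rpow_of_nonneg (by positivity) hp.le,
          ← ENNReal.ofReal_mul (by positivity), ← ENNReal.ofReal_mul (by positivity),
          ← ENNReal.ofReal_mul (by positivity)]
        congr 1
        rw [rpow_add_one hc.ne', rpow_add_one two_ne_zero, div_rpow hc.le zero_le_two]
        simp only [δ, c]
        field_simp
    _ ≤ 2 ^ (p + 1) * K * ∫⁻ t, ‖f t‖ₑ ^ p := by gcongr

theorem LipschitzWith.eLpNorm_top_le {E : Type*} [NormedAddCommGroup E] {f : ℝ → E} {K : ℝ≥0}
    (hf : LipschitzWith K f) (hK : K ≠ 0) {p : ℝ} (hp : 0 < p) :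
    eLpNorm f ⊤ volume ≤
      2 * (K : ℝ≥0∞) ^ (1 / (p + 1)) * eLpNorm f (ENNReal.ofReal p) volume ^ (p / (p + 1)) := by
  have hp₁ : 0 < p + 1 := by linarith
  rw [eLpNorm_exponent_top]
  refine eLpNormEssSup_le_of_ae_enorm_bound (ae_of_all _ fun x => ?_)
  calc ‖f x‖ₑ = (‖f x‖ₑ ^ (p + 1)) ^ (1 / (p + 1)) := by
        rw [← ENNReal.rpow_mul, mul_one_div_cancel hp₁.ne', ENNReal.rpow_one]
    _ ≤ (2 ^ (p + 1) * K * eLpNorm f (ENNReal.ofReal p) volume ^ p) ^ (1 / (p + 1)) := by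
        rw [eLpNorm_ofReal_rpow_eq_lintegral f hp]
        gcongr
        exact hf.enorm_rpow_le_lintegral hK hp x
    _ = 2 * (K : ℝ≥0∞) ^ (1 / (p + 1)) * eLpNorm f (ENNReal.ofReal p) volume ^ (p / (p + 1)) := by
        rw [ENNReal.mul_rpow_of_nonneg _ _ (by positivity),
          ENNReal.mul_rpow_of_nonneg _ _ (by positivity), ← ENNReal.rpow_mul, ← ENNReal.rpow_mul,
          mul_one_div_cancel hp₁.ne', ENNReal.rpow_one, mul_one_div]

theorem LipschitzWith.gagliardo_nirenberg {E : Type*} [NormedAddCommGroup E] {f : ℝ → E} {K : ℝ≥0}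
    (hf : LipschitzWith K f) (hK : K ≠ 0) {p₀ : ℝ} (hp₀ : 0 < p₀) {p : ℝ≥0∞}
    (hp : ENNReal.ofReal p₀ ≤ p) :
    eLpNorm f p volume ≤
      2 * (K : ℝ≥0∞) ^ ((1 / p₀ - 1 / p.toReal) / (1 + 1 / p₀)) *
        eLpNorm f (ENNReal.ofReal p₀) volume ^ (1 - (1 / p₀ - 1 / p.toReal) / (1 + 1 / p₀)) := by
  set θ := p₀ / p.toReal
  have hθ : θ ≤ 1 := by
    rcases eq_or_ne p ⊤ with rfl | hp_top
    · simp [θ]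
    · refine div_le_one_of_le₀ ?_ ENNReal.toReal_nonneg
      simpa [ENNReal.toReal_ofReal hp₀.le] using ENNReal.toReal_mono hp_top hp
  have hθ₀ : 0 ≤ θ := by positivity
  have hθ' : 0 ≤ 1 - θ := sub_nonneg.2 hθ
  have ha : (1 / p₀ - 1 / p.toReal) / (1 + 1 / p₀) = 1 / (p₀ + 1) * (1 - θ) := by
    simp only [θ]
    rw [div_eq_mul_inv p₀, one_div p.toReal]
    field_simp
  set N := eLpNorm f (ENNReal.ofReal p₀) volume
  rw [ha]
  calc eLpNorm f p volume ≤ eLpNorm f ⊤ volume ^ (1 - θ) * N ^ θ :=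
        eLpNorm_le_eLpNorm_top_rpow_mul_eLpNorm_rpow hf.continuous.aestronglyMeasurable hp₀ hp
    _ ≤ (2 * (K : ℝ≥0∞) ^ (1 / (p₀ + 1)) * N ^ (p₀ / (p₀ + 1))) ^ (1 - θ) * N ^ θ := by
        gcongr
        exact hf.eLpNorm_top_le hK hp₀
    _ = 2 ^ (1 - θ) * (K : ℝ≥0∞) ^ (1 / (p₀ + 1) * (1 - θ)) *
          N ^ (1 - 1 / (p₀ + 1) * (1 - θ)) := by
        have hexp : p₀ / (p₀ + 1) * (1 - θ) + θ = 1 - 1 / (p₀ + 1) * (1 - θ) := by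
          field_simp
          ring
        rw [ENNReal.mul_rpow_of_nonneg _ _ hθ', ENNReal.mul_rpow_of_nonneg _ _ hθ',
          ← ENNReal.rpow_mul, ← ENNReal.rpow_mul, mul_assoc,
          ← ENNReal.rpow_add_of_nonneg _ _ (mul_nonneg (by positivity) hθ') hθ₀, hexp, mul_assoc]
    _ ≤ 2 * (K : ℝ≥0∞) ^ (1 / (p₀ + 1) * (1 - θ)) * N ^ (1 - 1 / (p₀ + 1) * (1 - θ)) := by
        gcongr
        calc (2 : ℝ≥0∞) ^ (1 - θ) ≤ 2 ^ (1 : ℝ) :=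
              ENNReal.rpow_le_rpow_of_exponent_le one_le_two (by linarith)
          _ = 2 := ENNReal.rpow_one 2

/-- One-dimensional Gagliardo--Nirenberg inequality:
`‖v‖_p ≤ C ‖v'‖_∞^a ‖v‖_(p₀)^(1-a)` with `a = (1/p₀ - 1/p)/(1 + 1/p₀)`,
for `1 < p₀ < p ≤ ∞`. -/
theorem gagliardo_nirenberg_1d (p₀ : ℝ) (hp₀ : 1 < p₀)
    (p : ℝ≥0∞) (hp : ENNReal.ofReal p₀ < p) :
    ∃ C > (0:ℝ), ∀ v : ℝ → ℝ, ContDiff ℝ 1 v →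
      MemLp v (ENNReal.ofReal p₀) volume → MemLp (deriv v) ⊤ volume →
      eLpNorm v p volume ≤
        ENNReal.ofReal C *
          eLpNorm (deriv v) ⊤ volume ^ ((1 / p₀ - 1 / p.toReal) / (1 + 1 / p₀)) *
          eLpNorm v (ENNReal.ofReal p₀) volume ^
            (1 - (1 / p₀ - 1 / p.toReal) / (1 + 1 / p₀)) := by
  have hp₀_pos : 0 < p₀ := zero_lt_one.trans hp₀
  refine ⟨2, two_pos, fun v hv hv_mem hv'_mem => ?_⟩
  set M := eLpNorm (deriv v) ⊤ volume
  have hM : (M.toNNReal : ℝ≥0∞) = M := ENNReal.coe_toNNReal hv'_mem.eLpNorm_ne_top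
  have hLip : LipschitzWith M.toNNReal v :=
    lipschitzWith_of_nnnorm_deriv_le (hv.differentiable one_ne_zero) fun x => by
      rw [← ENNReal.coe_le_coe, hM]
      exact (hv.continuous_deriv le_rfl).enorm_le_eLpNorm_top x
  rcases eq_or_ne M.toNNReal 0 with hM₀ | hM₀
  · rw [hM₀] at hLip
    obtain rfl := hLip.eq_zero_of_memLp (by simpa using hp₀_pos) ENNReal.ofReal_ne_top hv_mem
    simp
  · rw [ENNReal.ofReal_ofNat, ← hM]
    exact hLip.gagliardo_nirenberg hM₀ hp₀_pos hp.le
end
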